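/- arXiv:2004.03840 — 5 statements merged into one kernel-verified Lean document; each statement's English description precedes it below -/
import Mathlib

section
/- Let Λ and Γ be translations of a proset P with ΛΓ = ΓΛ. Then the map Γ̄ : Σ_Λ P → Σ_Λ P defined by Γ̄(i) = Γ(i) and Γ̄(i') = (Γ(i))' is a translation of the shoelace proset Σ_Λ P: it is monotone and satisfies x ≤ Γ̄(x) for all x ∈ Σ_Λ P. -/
/-- The shoelace relation on `P ⊕ P` (left copy = `P`, right copy = `P'`). -/
def shoeLE {P : Type*} [Preorder P] (Λ : P → P) : P ⊕ P → P ⊕ P → Prop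
  | Sum.inl i, Sum.inl j => i ≤ j
  | Sum.inr i, Sum.inr j => i ≤ j
  | Sum.inl i, Sum.inr j => Λ i ≤ j
  | Sum.inr i, Sum.inl j => Λ i ≤ j

/-- The induced (untwisted) map `Γ̄` on `Σ_Λ P`: `Γ̄(i) = Γ(i)`, `Γ̄(i') = (Γ(i))'`. -/
def shoeBar {P : Type*} (Γ : P → P) : P ⊕ P → P ⊕ P := Sum.map Γ Γ

/-- If `Λ, Γ` are translations of `P` with `ΛΓ = ΓΛ`, then the
induced map `Γ̄` is a translation of the shoelace proset `Σ_Λ P`: monotone for the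
shoelace relation, and `x ≤ Γ̄(x)` for all `x ∈ Σ_Λ P`. -/
theorem shoeBar_isTranslation {P : Type*} [Preorder P] (Λ Γ : P → P)
    (hΛmono : Monotone Λ) (hΛle : ∀ x, x ≤ Λ x)
    (hΓmono : Monotone Γ) (hΓle : ∀ x, x ≤ Γ x)
    (hcomm : Λ ∘ Γ = Γ ∘ Λ) :
    (∀ x y : P ⊕ P, shoeLE Λ x y → shoeLE Λ (shoeBar Γ x) (shoeBar Γ y)) ∧
    (∀ x : P ⊕ P, shoeLE Λ x (shoeBar Γ x)) := by
  have hc : ∀ i, Λ (Γ i) = Γ (Λ i) := fun i => congrFun hcomm i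
  constructor
  · rintro (i | i) (j | j) h <;>
      simp only [shoeBar, Sum.map_inl, Sum.map_inr, shoeLE] at h ⊢
    · exact hΓmono h
    · rw [hc]; exact hΓmono h
    · rw [hc]; exact hΓmono h
    · exact hΓmono h
  · rintro (i | i) <;> simp only [shoeBar, Sum.map_inl, Sum.map_inr, shoeLE] <;> exact hΓle i
end

section
/- Let Λ and Γ be translations of a proset P with ΛΓ = ΓΛ and Λ ≤ Γ pointwise. Then the twisted map Γ̃ : Σ_Λ P → Σ_Λ P defined by Γ̃(i) = (Γ(i))' and Γ̃(i') = Γ(i) is a translation of Σ_Λ P: it is monotone and satisfies x ≤ Γ̃(x) for all x ∈ Σ_Λ P. -/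
/-- The induced twisted map `Γ̃` on `Σ_Λ P`: `Γ̃(i) = (Γ(i))'`, `Γ̃(i') = Γ(i)`. -/
def shoeTwist {P : Type*} (Γ : P → P) : P ⊕ P → P ⊕ P :=
  Sum.elim (fun i => Sum.inr (Γ i)) (fun i => Sum.inl (Γ i))

/-- If `Λ, Γ` are translations of `P` with `ΛΓ = ΓΛ` and `Λ ≤ Γ`
pointwise, then the twisted map `Γ̃` is a translation of the shoelace proset
`Σ_Λ P`: monotone for the shoelace relation, and `x ≤ Γ̃(x)` for all `x`. -/
theorem shoeTwist_isTranslation {P : Type*} [Preorder P] (Λ Γ : P → P)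
    (hΛmono : Monotone Λ) (hΛle : ∀ x, x ≤ Λ x)
    (hΓmono : Monotone Γ) (hΓle : ∀ x, x ≤ Γ x)
    (hcomm : Λ ∘ Γ = Γ ∘ Λ) (hΛΓ : ∀ i, Λ i ≤ Γ i) :
    (∀ x y : P ⊕ P, shoeLE Λ x y → shoeLE Λ (shoeTwist Γ x) (shoeTwist Γ y)) ∧
    (∀ x : P ⊕ P, shoeLE Λ x (shoeTwist Γ x)) := by
  have hc : ∀ i, Λ (Γ i) = Γ (Λ i) := fun i => congrFun hcomm i
  constructor
  · rintro (i | i) (j | j) h <;> simp only [shoeTwist, Sum.elim_inl, Sum.elim_inr, shoeLE] at h ⊢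
    · exact hΓmono h
    · rw [hc]; exact hΓmono h
    · rw [hc]; exact hΓmono h
    · exact hΓmono h
  · rintro (i | i) <;> simp only [shoeTwist, Sum.elim_inl, Sum.elim_inr, shoeLE] <;> exact hΛΓ i
end

section
/- There is an isomorphism of categories between the category of Λ-interleavings Int_Λ(P, D) and the representation category D^{Σ_Λ P} of the shoelace proset. -/
open CategoryTheory

/-- A translation of a proset `P`, bundled. -/
structure Translation (P : Type) [Preorder P] where
  toFun : P → P
  mono : Monotone toFun
  le_self : ∀ x, x ≤ toFun x

variable {P : Type} [Preorder P]

/-- The shoelace `Σ_Λ P`: two copies of `P`. -/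
def Shoe (T : Translation P) : Type := P ⊕ P

/-- The shoelace preorder. -/
instance {T : Translation P} : Preorder (Shoe T) where
  le x y := match x, y with
    | Sum.inl i, Sum.inl j => i ≤ j
    | Sum.inr i, Sum.inr j => i ≤ j
    | Sum.inl i, Sum.inr j => T.toFun i ≤ j
    | Sum.inr i, Sum.inl j => T.toFun i ≤ j
  le_refl x := by cases x <;> exact le_refl _
  le_trans x y z h1 h2 := by
    rcases x with i | i <;> rcases y with j | j <;> rcases z with k | k
    · exact le_trans h1 h2
    · exact le_trans (T.mono h1) h2
    · exact le_trans (T.le_self i) (le_trans h1 (le_trans (T.le_self j) h2))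
    · exact le_trans h1 h2
    · exact le_trans h1 h2
    · exact le_trans (T.le_self i) (le_trans h1 (le_trans (T.le_self j) h2))
    · exact le_trans (T.mono h1) h2
    · exact le_trans h1 h2

variable {D : Type*} [Category D]

/-- An object of the category of `Λ`-interleavings: a pair of representations
`M, N : P ⥤ D` with a `Λ`-interleaving pair `(φ, ψ)`. -/
structure IntObj (T : Translation P) (D : Type*) [Category D] where
  M : P ⥤ D
  N : P ⥤ D
  φ : ∀ x, M.obj x ⟶ N.obj (T.toFun x)
  ψ : ∀ x, N.obj x ⟶ M.obj (T.toFun x)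
  natφ : ∀ x y (h : x ≤ y),
    M.map (homOfLE h) ≫ φ y = φ x ≫ N.map (homOfLE (T.mono h))
  natψ : ∀ x y (h : x ≤ y),
    N.map (homOfLE h) ≫ ψ y = ψ x ≫ M.map (homOfLE (T.mono h))
  intφψ : ∀ x, φ x ≫ ψ (T.toFun x) =
    M.map (homOfLE ((T.le_self x).trans (T.le_self (T.toFun x))))
  intψφ : ∀ x, ψ x ≫ φ (T.toFun x) =
    N.map (homOfLE ((T.le_self x).trans (T.le_self (T.toFun x))))

/-- A morphism of `Λ`-interleavings: a pair `(g_M, g_N)` of natural transformations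
commuting with the interleaving morphisms. -/
@[ext]
structure IntHom {T : Translation P} (A B : IntObj T D) where
  gM : A.M ⟶ B.M
  gN : A.N ⟶ B.N
  commφ : ∀ x, A.φ x ≫ gN.app (T.toFun x) = gM.app x ≫ B.φ x
  commψ : ∀ x, A.ψ x ≫ gM.app (T.toFun x) = gN.app x ≫ B.ψ x

/-- The category `Int_Λ(P, D)` of `Λ`-interleavings. -/
instance IntCat (T : Translation P) : Category (IntObj T D) where
  Hom A B := IntHom A B
  id A := ⟨𝟙 A.M, 𝟙 A.N, by simp, by simp⟩
  comp f g := ⟨f.gM ≫ g.gM, f.gN ≫ g.gN,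
    fun x => by simp [reassoc_of% (f.commφ x), g.commφ x],
    fun x => by simp [reassoc_of% (f.commψ x), g.commψ x]⟩
  id_comp f := by apply IntHom.ext <;> simp
  comp_id f := by apply IntHom.ext <;> simp
  assoc f g h := by apply IntHom.ext <;> simp

/-!
A representation `X` of the shoelace restricts along the two inclusions `P → Σ_Λ P` to `M` and `N`,
and its values on the relations `inl x ≤ inr (Λ x)` and `inr x ≤ inl (Λ x)` are `φ x` and `ψ x`;
functoriality of `X` on mixed composites is exactly naturality of `φ, ψ` together with the
interleaving identities. Conversely, in the shoelace every relation `inl i ≤ inr j` factors through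
`inr (Λ i)`, so an interleaving determines the representation by `φ i ≫ N(Λ i ≤ j)`. The two
constructions are mutually inverse on the nose.
-/

theorem CategoryTheory.NatTrans.hext {C : Type*} [Category C] {F F' G G' : C ⥤ D}
    (hF : F = F') (hG : G = G') {α : F ⟶ G} {β : F' ⟶ G'} (h : ∀ X, α.app X ≍ β.app X) :
    α ≍ β := by
  subst hF hG
  exact heq_of_eq (NatTrans.ext (funext fun X => eq_of_heq (h X)))

section Thin

variable {Q : Type*} [Preorder Q] (X : Q ⥤ D) {a b b' c : Q}

theorem CategoryTheory.Functor.map_comp_map_eq_map (f : a ⟶ b) (g : b ⟶ c) (h : a ⟶ c) :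
    X.map f ≫ X.map g = X.map h := by
  rw [← X.map_comp, Subsingleton.elim (f ≫ g) h]

theorem CategoryTheory.Functor.map_comp_map_eq_map_comp_map (f : a ⟶ b) (g : b ⟶ c)
    (f' : a ⟶ b') (g' : b' ⟶ c) : X.map f ≫ X.map g = X.map f' ≫ X.map g' := by
  rw [← X.map_comp, ← X.map_comp, Subsingleton.elim (f ≫ g) (f' ≫ g')]

@[simp]
theorem CategoryTheory.Functor.map_homOfLE_comp_map_homOfLE (hab : a ≤ b) (hbc : b ≤ c) :
    X.map (homOfLE hab) ≫ X.map (homOfLE hbc) = X.map (homOfLE (hab.trans hbc)) :=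
  X.map_comp_map_eq_map _ _ _

end Thin

namespace Shoe

variable {T : Translation P} {x y : P}

-- `(Sum.inl x : Shoe T) ≤ Sum.inl y` would elaborate to the order of `P ⊕ P`, not the shoelace.
theorem inl_le_inl : LE.le (α := Shoe T) (.inl x) (.inl y) ↔ x ≤ y := Iff.rfl
theorem inr_le_inr : LE.le (α := Shoe T) (.inr x) (.inr y) ↔ x ≤ y := Iff.rfl
theorem inl_le_inr : LE.le (α := Shoe T) (.inl x) (.inr y) ↔ T.toFun x ≤ y := Iff.rfl
theorem inr_le_inl : LE.le (α := Shoe T) (.inr x) (.inl y) ↔ T.toFun x ≤ y := Iff.rfl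

variable (T)

def inlFunctor : P ⥤ Shoe T where
  obj := Sum.inl
  map h := homOfLE (inl_le_inl.2 h.le)

def inrFunctor : P ⥤ Shoe T where
  obj := Sum.inr
  map h := homOfLE (inr_le_inr.2 h.le)

end Shoe

attribute [ext] IntObj

theorem IntHom.hext {T : Translation P} {A A' B B' : IntObj T D} (hA : A = A') (hB : B = B')
    {f : A ⟶ B} {g : A' ⟶ B'} (hM : f.gM ≍ g.gM) (hN : f.gN ≍ g.gN) : f ≍ g := by
  subst hA hB
  exact heq_of_eq (IntHom.ext (eq_of_heq hM) (eq_of_heq hN))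

namespace IntObj

variable {T : Translation P}

def toShoeRep (A : IntObj T D) : Shoe T ⥤ D where
  obj
    | .inl i => A.M.obj i
    | .inr i => A.N.obj i
  map {s t} h := match s, t, h with
    | .inl _, .inl _, h => A.M.map (homOfLE (Shoe.inl_le_inl.1 h.le))
    | .inl i, .inr _, h => A.φ i ≫ A.N.map (homOfLE (Shoe.inl_le_inr.1 h.le))
    | .inr i, .inl _, h => A.ψ i ≫ A.M.map (homOfLE (Shoe.inr_le_inl.1 h.le))
    | .inr _, .inr _, h => A.N.map (homOfLE (Shoe.inr_le_inr.1 h.le))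
  map_id
    | .inl i => A.M.map_id i
    | .inr i => A.N.map_id i
  map_comp {s t u} f g := by
    rcases s with i | i <;> rcases t with j | j <;> rcases u with k | k <;> dsimp only
    all_goals
      simp [reassoc_of% A.natφ, reassoc_of% A.natψ, reassoc_of% A.intφψ, reassoc_of% A.intψφ]

def ofShoeRep (X : Shoe T ⥤ D) : IntObj T D where
  M := Shoe.inlFunctor T ⋙ X
  N := Shoe.inrFunctor T ⋙ X
  φ _ := X.map (homOfLE (Shoe.inl_le_inr.2 le_rfl))
  ψ _ := X.map (homOfLE (Shoe.inr_le_inl.2 le_rfl))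
  natφ _ _ _ := X.map_comp_map_eq_map_comp_map _ _ _ _
  natψ _ _ _ := X.map_comp_map_eq_map_comp_map _ _ _ _
  intφψ _ := X.map_comp_map_eq_map _ _ _
  intψφ _ := X.map_comp_map_eq_map _ _ _

variable (T) in
def toShoeRepFunctor : IntObj T D ⥤ (Shoe T ⥤ D) where
  obj := toShoeRep
  map f :=
    { app
        | .inl i => f.gM.app i
        | .inr i => f.gN.app i
      naturality := by
        rintro (i | i) (j | j) h <;> simp [toShoeRep, reassoc_of% f.commφ, reassoc_of% f.commψ] }
  map_id _ := by ext (i | i) <;> rfl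
  map_comp _ _ := by ext (i | i) <;> rfl

variable (T) in
def ofShoeRepFunctor : (Shoe T ⥤ D) ⥤ IntObj T D where
  obj := ofShoeRep
  map η :=
    { gM := Functor.whiskerLeft (Shoe.inlFunctor T) η
      gN := Functor.whiskerLeft (Shoe.inrFunctor T) η
      commφ _ := η.naturality _
      commψ _ := η.naturality _ }

theorem ofShoeRep_toShoeRep (A : IntObj T D) : ofShoeRep (toShoeRep A) = A := by
  ext
  · rfl
  · rfl
  · exact heq_of_eq (funext fun x => show A.φ x ≫ A.N.map (𝟙 _) = A.φ x by simp)
  · exact heq_of_eq (funext fun x => show A.ψ x ≫ A.M.map (𝟙 _) = A.ψ x by simp)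

theorem toShoeRep_ofShoeRep (X : Shoe T ⥤ D) : toShoeRep (ofShoeRep X) = X := by
  refine CategoryTheory.Functor.hext (by rintro (i | i) <;> rfl) ?_
  rintro (i | i) (j | j) h
  · rfl
  · exact heq_of_eq (X.map_comp_map_eq_map _ _ _)
  · exact heq_of_eq (X.map_comp_map_eq_map _ _ _)
  · rfl

theorem toShoeRepFunctor_comp_ofShoeRepFunctor :
    toShoeRepFunctor T ⋙ ofShoeRepFunctor T = 𝟭 (IntObj T D) :=
  CategoryTheory.Functor.hext ofShoeRep_toShoeRep fun A B _ =>
    IntHom.hext (ofShoeRep_toShoeRep A) (ofShoeRep_toShoeRep B) .rfl .rfl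

theorem ofShoeRepFunctor_comp_toShoeRepFunctor :
    ofShoeRepFunctor T ⋙ toShoeRepFunctor T = 𝟭 (Shoe T ⥤ D) :=
  CategoryTheory.Functor.hext toShoeRep_ofShoeRep fun X Y _ =>
    NatTrans.hext (toShoeRep_ofShoeRep X) (toShoeRep_ofShoeRep Y) fun
      | .inl _ => .rfl
      | .inr _ => .rfl

end IntObj

/-- The category of `Λ`-interleavings `Int_Λ(P, D)` is isomorphic
to the representation category `D^{Σ_Λ P}` of the shoelace proset: there are
functors composing to the identities in both orders. -/
theorem int_iso_shoelace_rep (T : Translation P) :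
    ∃ (F : IntObj T D ⥤ (Shoe T ⥤ D)) (G : (Shoe T ⥤ D) ⥤ IntObj T D),
      F ⋙ G = 𝟭 (IntObj T D) ∧ G ⋙ F = 𝟭 (Shoe T ⥤ D) :=
  ⟨IntObj.toShoeRepFunctor T, IntObj.ofShoeRepFunctor T,
    IntObj.toShoeRepFunctor_comp_ofShoeRepFunctor, IntObj.ofShoeRepFunctor_comp_toShoeRepFunctor⟩
end

section
/- Given a Λ-interleaving (M, N, φ, ψ), the assignment V(i) = M(i), V(i') = N(i), V(j ≥ i) = M(j ≥ i), V(j' ≥ i') = N(j ≥ i), V(j' ≥ i) = N(j ≥ Λi)∘φ(i), V(j ≥ i') = M(j ≥ Λi)∘ψ(i) defines a functor V : Σ_Λ P → D; in particular functoriality holds in the 'swap-swap' case: for k ≥ j' ≥ i in Σ_Λ P, V(k ≥ j')∘V(j' ≥ i) = V(k ≥ i). -/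
/-!
Within one copy of `P`, functoriality is that of `M` or `N`. A composite that changes copies
once reduces, by naturality of `φ` or `ψ`, to a single `φ i ≫ N.map _` or `ψ i ≫ M.map _`.
A composite that changes copies twice collapses `φ i ≫ ψ (Λ i)` (or `ψ i ≫ φ (Λ i)`) by an
interleaving identity. Every mixed case for `(M, N, φ, ψ)` is the mirror image of one for
`(N, M, ψ, φ)`.
-/

open CategoryTheory

variable {P : Type} [Preorder P]

/-- The left copy of `P` inside `Σ_Λ P`. -/
def Shoe.l {T : Translation P} (i : P) : Shoe T := Sum.inl i

/-- The right copy of `P` inside `Σ_Λ P` (the "primed" copy). -/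
def Shoe.r {T : Translation P} (i : P) : Shoe T := Sum.inr i

lemma Shoe.l_le_l {T : Translation P} {i j : P} (h : i ≤ j) :
    (Shoe.l i : Shoe T) ≤ Shoe.l j := h

lemma Shoe.r_le_r {T : Translation P} {i j : P} (h : i ≤ j) :
    (Shoe.r i : Shoe T) ≤ Shoe.r j := h

lemma Shoe.l_le_r {T : Translation P} {i j : P} (h : T.toFun i ≤ j) :
    (Shoe.l i : Shoe T) ≤ Shoe.r j := h

lemma Shoe.r_le_l {T : Translation P} {i j : P} (h : T.toFun i ≤ j) :
    (Shoe.r i : Shoe T) ≤ Shoe.l j := h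

lemma CategoryTheory.Functor.map_homOfLE_comp_map_homOfLE_s13 {X C : Type*} [Preorder X] [Category C]
    (F : X ⥤ C) {i j k : X} (h₁ : i ≤ j) (h₂ : j ≤ k) :
    F.map (homOfLE h₁) ≫ F.map (homOfLE h₂) = F.map (homOfLE (h₁.trans h₂)) :=
  (F.map_comp _ _).symm

section Interleaving

variable {D : Type*} [Category D] {T : Translation P} {M N : P ⥤ D}
  (φ : ∀ x, M.obj x ⟶ N.obj (T.toFun x)) (ψ : ∀ x, N.obj x ⟶ M.obj (T.toFun x))

lemma map_comp_comp_map_of_naturality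
    (natφ : ∀ x y (h : x ≤ y), M.map (homOfLE h) ≫ φ y = φ x ≫ N.map (homOfLE (T.mono h)))
    {i j k : P} (h₁ : i ≤ j) (h₂ : T.toFun j ≤ k) :
    M.map (homOfLE h₁) ≫ φ j ≫ N.map (homOfLE h₂) =
      φ i ≫ N.map (homOfLE ((T.mono h₁).trans h₂)) := by
  rw [← Category.assoc, natφ i j h₁, Category.assoc, N.map_homOfLE_comp_map_homOfLE_s13]

lemma interleaving_swap_swap
    (natψ : ∀ x y (h : x ≤ y), N.map (homOfLE h) ≫ ψ y = ψ x ≫ M.map (homOfLE (T.mono h)))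
    (intφψ : ∀ x, φ x ≫ ψ (T.toFun x) =
      M.map (homOfLE ((T.le_self x).trans (T.le_self (T.toFun x)))))
    {i j k : P} (h₁ : T.toFun i ≤ j) (h₂ : T.toFun j ≤ k) :
    φ i ≫ N.map (homOfLE h₁) ≫ ψ j ≫ M.map (homOfLE h₂) =
      M.map (homOfLE (((T.le_self i).trans h₁).trans ((T.le_self j).trans h₂))) := by
  rw [map_comp_comp_map_of_naturality ψ natψ, ← Category.assoc, intφψ,
    M.map_homOfLE_comp_map_homOfLE_s13]

variable (M N) in
def Shoe.interleavingObj : Shoe T → D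
  | Sum.inl i => M.obj i
  | Sum.inr i => N.obj i

def Shoe.interleavingMap :
    ∀ {x y : Shoe T}, x ≤ y → (interleavingObj M N x ⟶ interleavingObj M N y)
  | Sum.inl _, Sum.inl _, h => M.map (homOfLE h)
  | Sum.inl i, Sum.inr _, h => φ i ≫ N.map (homOfLE h)
  | Sum.inr i, Sum.inl _, h => ψ i ≫ M.map (homOfLE h)
  | Sum.inr _, Sum.inr _, h => N.map (homOfLE h)

variable
    (natφ : ∀ x y (h : x ≤ y), M.map (homOfLE h) ≫ φ y = φ x ≫ N.map (homOfLE (T.mono h)))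
    (natψ : ∀ x y (h : x ≤ y), N.map (homOfLE h) ≫ ψ y = ψ x ≫ M.map (homOfLE (T.mono h)))
    (intφψ : ∀ x, φ x ≫ ψ (T.toFun x) =
      M.map (homOfLE ((T.le_self x).trans (T.le_self (T.toFun x)))))
    (intψφ : ∀ x, ψ x ≫ φ (T.toFun x) =
      N.map (homOfLE ((T.le_self x).trans (T.le_self (T.toFun x)))))

include natφ natψ intφψ intψφ in
lemma Shoe.interleavingMap_comp :
    ∀ {x y z : Shoe T} (h₁ : x ≤ y) (h₂ : y ≤ z),
      interleavingMap φ ψ h₁ ≫ interleavingMap φ ψ h₂ = interleavingMap φ ψ (h₁.trans h₂)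
  | Sum.inl _, Sum.inl _, Sum.inl _, h₁, h₂ => M.map_homOfLE_comp_map_homOfLE_s13 h₁ h₂
  | Sum.inl _, Sum.inl _, Sum.inr _, h₁, h₂ => map_comp_comp_map_of_naturality φ natφ h₁ h₂
  | Sum.inl _, Sum.inr _, Sum.inl _, h₁, h₂ => (Category.assoc _ _ _).trans
    (interleaving_swap_swap φ ψ natψ intφψ h₁ h₂)
  | Sum.inl i, Sum.inr _, Sum.inr _, h₁, h₂ => (Category.assoc _ _ _).trans
    (congrArg (φ i ≫ ·) (N.map_homOfLE_comp_map_homOfLE_s13 h₁ h₂))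
  | Sum.inr i, Sum.inl _, Sum.inl _, h₁, h₂ => (Category.assoc _ _ _).trans
    (congrArg (ψ i ≫ ·) (M.map_homOfLE_comp_map_homOfLE_s13 h₁ h₂))
  | Sum.inr _, Sum.inl _, Sum.inr _, h₁, h₂ => (Category.assoc _ _ _).trans
    (interleaving_swap_swap ψ φ natφ intψφ h₁ h₂)
  | Sum.inr _, Sum.inr _, Sum.inl _, h₁, h₂ => map_comp_comp_map_of_naturality ψ natψ h₁ h₂
  | Sum.inr _, Sum.inr _, Sum.inr _, h₁, h₂ => N.map_homOfLE_comp_map_homOfLE_s13 h₁ h₂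

def Shoe.interleavingFunctor : Shoe T ⥤ D where
  obj := interleavingObj M N
  map f := interleavingMap φ ψ (leOfHom f)
  map_id
    | Sum.inl i => M.map_id i
    | Sum.inr i => N.map_id i
  map_comp f g := (interleavingMap_comp φ ψ natφ natψ intφψ intψφ (leOfHom f) (leOfHom g)).symm

end Interleaving

/-- Given a `Λ`-interleaving `(M, N, φ, ψ)`, the assignment
`V(i) = M(i)`, `V(i') = N(i)`, `V(j ≥ i) = M(j ≥ i)`, `V(j' ≥ i') = N(j ≥ i)`,
`V(j' ≥ i) = N(j ≥ Λi) ∘ φ(i)`, `V(j ≥ i') = M(j ≥ Λi) ∘ ψ(i)` defines a functor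
`V : Σ_Λ P ⥤ D`; in particular the swap-swap functoriality
`V(k ≥ j') ∘ V(j' ≥ i) = V(k ≥ i)` holds. -/
theorem interleaving_defines_shoelace_functor {D : Type*} [Category D]
    (T : Translation P) (M N : P ⥤ D)
    (φ : ∀ x, M.obj x ⟶ N.obj (T.toFun x)) (ψ : ∀ x, N.obj x ⟶ M.obj (T.toFun x))
    (natφ : ∀ x y (h : x ≤ y),
      M.map (homOfLE h) ≫ φ y = φ x ≫ N.map (homOfLE (T.mono h)))
    (natψ : ∀ x y (h : x ≤ y),
      N.map (homOfLE h) ≫ ψ y = ψ x ≫ M.map (homOfLE (T.mono h)))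
    (intφψ : ∀ x, φ x ≫ ψ (T.toFun x) =
      M.map (homOfLE ((T.le_self x).trans (T.le_self (T.toFun x)))))
    (intψφ : ∀ x, ψ x ≫ φ (T.toFun x) =
      N.map (homOfLE ((T.le_self x).trans (T.le_self (T.toFun x))))) :
    ∃ (V : Shoe T ⥤ D)
      (hl : ∀ i, V.obj (Shoe.l i) = M.obj i)
      (hr : ∀ i, V.obj (Shoe.r i) = N.obj i),
      (∀ i j (h : i ≤ j), V.map (homOfLE (Shoe.l_le_l h)) =
        eqToHom (hl i) ≫ M.map (homOfLE h) ≫ eqToHom (hl j).symm) ∧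
      (∀ i j (h : i ≤ j), V.map (homOfLE (Shoe.r_le_r h)) =
        eqToHom (hr i) ≫ N.map (homOfLE h) ≫ eqToHom (hr j).symm) ∧
      (∀ i j (h : T.toFun i ≤ j), V.map (homOfLE (Shoe.l_le_r h)) =
        eqToHom (hl i) ≫ φ i ≫ N.map (homOfLE h) ≫ eqToHom (hr j).symm) ∧
      (∀ i j (h : T.toFun i ≤ j), V.map (homOfLE (Shoe.r_le_l h)) =
        eqToHom (hr i) ≫ ψ i ≫ M.map (homOfLE h) ≫ eqToHom (hl j).symm) ∧
      (∀ i j k (h1 : T.toFun i ≤ j) (h2 : T.toFun j ≤ k),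
        V.map (homOfLE (Shoe.l_le_r h1)) ≫ V.map (homOfLE (Shoe.r_le_l h2))
          = V.map (homOfLE (le_trans (Shoe.l_le_r h1) (Shoe.r_le_l h2)))) := by
  refine ⟨Shoe.interleavingFunctor φ ψ natφ natψ intφψ intψφ, fun _ => rfl, fun _ => rfl,
    ?_, ?_, ?_, ?_, fun _ _ _ _ _ => (Functor.map_comp _ _ _).symm⟩ <;>
  · intro i j h
    -- both `eqToHom`s are identities, but only after unfolding `V.obj`
    exact (Category.id_comp _).symm.trans (by erw [Category.comp_id]; rfl)
end

section
/- If L is an interval representation of the shoelace proset Σ_ε ℤ whose restrictions to the left and right copies of ℤ are the (nonzero) interval modules I[x,y] and I[s,t] respectively, then |x−s| ≤ ε and |y−t| ≤ ε; moreover, if additionally |y−x| < 2ε and |t−s| < 2ε, then s−ε ≤ x ≤ t−ε ≤ y or x−ε ≤ s ≤ y−ε ≤ t. -/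
open CategoryTheory

variable {P : Type} [Preorder P]

/-- The translation `Λ_ε : x ↦ x + ε` of `ℤ`. -/
def lamT (ε : ℕ) : Translation ℤ where
  toFun a := a + ε
  mono _ _ h := add_le_add_left h _
  le_self a := le_add_of_nonneg_right (Int.natCast_nonneg ε)

/-- The canonical embedding of `ℤ` into `ℤ ∪ {±∞}` (modelled inside `EReal`). -/
noncomputable def zE (a : ℤ) : EReal := ((a : ℝ) : EReal)

/-- `|a − b| ≤ ε`, with the paper's conventions for `±∞`:
`|±∞ − (±∞)| = 0` and `|±∞ − b| = |a − (±∞)| = ∞` otherwise. -/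
noncomputable def closeE (ε : ℕ) (a b : EReal) : Prop :=
  a = b ∨ ∃ a0 b0 : ℤ, a = zE a0 ∧ b = zE b0 ∧ |a0 - b0| ≤ (ε : ℤ)

/-- The support of a representation. -/
def suppSet {Q : Type*} [Preorder Q] {K : Type} [Field K]
    (V : Q ⥤ ModuleCat K) : Set Q := {z | Nontrivial (V.obj z)}

/-- A connected subposet: it admits no splitting into two nonempty mutually
incomparable parts. -/
def IsConnectedSubposet {Q : Type*} [Preorder Q] (S : Set Q) : Prop :=
  ∀ S1 S2 : Set Q, S1 ∪ S2 = S → S1 ∩ S2 = ∅ →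
    (∀ a ∈ S1, ∀ b ∈ S2, ¬(a ≤ b ∨ b ≤ a)) → S1 = ∅ ∨ S2 = ∅

/-- A convex subposet. -/
def IsConvexSubposet {Q : Type*} [Preorder Q] (S : Set Q) : Prop :=
  ∀ a b c : Q, a ≤ b → b ≤ c → a ∈ S → c ∈ S → b ∈ S

/-- An interval representation: pointwise dimension at most one, connected and
convex support, and all internal maps on the support are isomorphisms. -/
def IsIntervalRep {Q : Type*} [Preorder Q] {K : Type} [Field K]
    (V : Q ⥤ ModuleCat K) : Prop :=
  (∀ z, Module.finrank K (V.obj z) ≤ 1) ∧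
  IsConnectedSubposet (suppSet V) ∧ IsConvexSubposet (suppSet V) ∧
  (∀ z w (h : z ≤ w), z ∈ suppSet V → w ∈ suppSet V →
    Function.Bijective (V.map (homOfLE h)))

/-!
Convexity of the support transports endpoints across the shoelace: if a left point `a` is in
the support, then any right point between `a + ε` and a right point of the support is in it too
(`l a ≤ r b ≤ r c`), and dually at the upper ends.  Hence neither interval can start or end
more than `ε` before the other.  Connectedness of the support provides a left point `a` and a
right point `b` with `a + ε ≤ b` or `b + ε ≤ a`; the first case gives `x ≤ t - ε`, the second
`s ≤ y - ε`, and the outer inequalities are the endpoint bounds.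
-/

lemma zE_le_zE {a b : ℤ} : zE a ≤ zE b ↔ a ≤ b := by simp [zE]

lemma zE_mono : Monotone zE := fun _ _ => zE_le_zE.2

lemma exists_zE_mem_Icc {x y : EReal} (hx : x = ⊥ ∨ ∃ n : ℤ, x = zE n)
    (hy : y = ⊤ ∨ ∃ n : ℤ, y = zE n) (hxy : x ≤ y) : ∃ a : ℤ, x ≤ zE a ∧ zE a ≤ y := by
  rcases hx with rfl | ⟨n, rfl⟩
  · rcases hy with rfl | ⟨m, rfl⟩
    · exact ⟨0, bot_le, le_top⟩
    · exact ⟨m, bot_le, le_rfl⟩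
  · exact ⟨n, le_rfl, hxy⟩

lemma closeE_of_forall_le_zE_add {ε : ℕ} {x s : EReal} (hx : x = ⊥ ∨ ∃ n : ℤ, x = zE n)
    (hs : s = ⊥ ∨ ∃ n : ℤ, s = zE n)
    (hxs : ∀ m : ℤ, x ≤ zE m → s ≤ zE (m + ε)) (hsx : ∀ m : ℤ, s ≤ zE m → x ≤ zE (m + ε)) :
    closeE ε x s := by
  rcases hx with rfl | ⟨x0, rfl⟩ <;> rcases hs with rfl | ⟨s0, rfl⟩
  · exact Or.inl rfl
  · have := zE_le_zE.1 (hxs (s0 - ε - 1) bot_le)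
    omega
  · have := zE_le_zE.1 (hsx (x0 - ε - 1) bot_le)
    omega
  · have h₁ := zE_le_zE.1 (hxs x0 le_rfl)
    have h₂ := zE_le_zE.1 (hsx s0 le_rfl)
    exact Or.inr ⟨x0, s0, rfl, rfl, abs_le.2 ⟨by omega, by omega⟩⟩

lemma closeE_of_forall_zE_sub_le {ε : ℕ} {y t : EReal} (hy : y = ⊤ ∨ ∃ n : ℤ, y = zE n)
    (ht : t = ⊤ ∨ ∃ n : ℤ, t = zE n)
    (hyt : ∀ m : ℤ, zE m ≤ y → zE (m - ε) ≤ t) (hty : ∀ m : ℤ, zE m ≤ t → zE (m - ε) ≤ y) :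
    closeE ε y t := by
  rcases hy with rfl | ⟨y0, rfl⟩ <;> rcases ht with rfl | ⟨t0, rfl⟩
  · exact Or.inl rfl
  · have := zE_le_zE.1 (hyt (t0 + ε + 1) le_top)
    omega
  · have := zE_le_zE.1 (hty (y0 + ε + 1) le_top)
    omega
  · have h₁ := zE_le_zE.1 (hyt y0 le_rfl)
    have h₂ := zE_le_zE.1 (hty t0 le_rfl)
    exact Or.inr ⟨y0, t0, rfl, rfl, abs_le.2 ⟨by omega, by omega⟩⟩

section ConvexSubposet

variable {Q R : Type*} [Preorder Q] [Preorder R] {S : Set Q}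

lemma IsConvexSubposet.preimage (hS : IsConvexSubposet S) {f : R → Q} (hf : Monotone f) :
    IsConvexSubposet (f ⁻¹' S) :=
  fun _ _ _ hab hbc ha hc => hS _ _ _ (hf hab) (hf hbc) ha hc

variable {L : Type*} [LinearOrder L] {f : L → Q} {p : Q} {b c : L}

lemma IsConvexSubposet.apply_min_mem (hS : IsConvexSubposet S) (hf : Monotone f)
    (hp : p ∈ S) (hc : f c ∈ S) (hpb : p ≤ f b) : f (min b c) ∈ S := by
  rcases le_total b c with hbc | hcb
  · rw [min_eq_left hbc]
    exact hS _ _ _ hpb (hf hbc) hp hc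
  · rwa [min_eq_right hcb]

lemma IsConvexSubposet.apply_max_mem (hS : IsConvexSubposet S) (hf : Monotone f)
    (hp : p ∈ S) (hc : f c ∈ S) (hbp : f b ≤ p) : f (max b c) ∈ S := by
  rcases le_total c b with hcb | hbc
  · rw [max_eq_left hcb]
    exact hS _ _ _ (hf hcb) hbp hc hp
  · rwa [max_eq_right hbc]

end ConvexSubposet

namespace Shoe

variable {T : Translation P}

def swap : Shoe T → Shoe T := Sum.swap

lemma r_mono : Monotone (Shoe.r : P → Shoe T) := fun _ _ => r_le_r

lemma swap_mono : Monotone (swap : Shoe T → Shoe T) := by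
  rintro (i | i) (j | j) h <;> exact h

lemma exists_comparable_of_isConnectedSubposet {S : Set (Shoe T)} (hS : IsConnectedSubposet S)
    {a b : P} (ha : l a ∈ S) (hb : r b ∈ S) :
    ∃ a b : P, l a ∈ S ∧ r b ∈ S ∧ (T.toFun a ≤ b ∨ T.toFun b ≤ a) := by
  by_contra hne
  have hcover : S ∩ Set.range l ∪ S ∩ Set.range r = S := by
    rw [← Set.inter_union_distrib_left]
    refine Set.inter_eq_left.2 fun z _ => ?_
    rcases z with i | i
    exacts [Or.inl ⟨i, rfl⟩, Or.inr ⟨i, rfl⟩]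
  have hdisj : S ∩ Set.range l ∩ (S ∩ Set.range r) = ∅ := by
    refine Set.eq_empty_iff_forall_notMem.2 ?_
    rintro _ ⟨⟨-, i, rfl⟩, -, j, hj⟩
    exact Sum.inr_ne_inl hj
  have hsplit := hS _ _ hcover hdisj (by
    rintro _ ⟨hp, a, rfl⟩ _ ⟨hq, b, rfl⟩ hcomp
    exact hne ⟨a, b, hp, hq, hcomp⟩)
  rcases hsplit with h | h
  · exact Set.eq_empty_iff_forall_notMem.1 h _ ⟨ha, a, rfl⟩
  · exact Set.eq_empty_iff_forall_notMem.1 h _ ⟨hb, b, rfl⟩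

end Shoe

section Endpoints

variable {ε : ℕ} {S : Set (Shoe (lamT ε))} {x y s t : EReal} {a₀ b₀ : ℤ}

lemma le_zE_add_of_le_zE (hS : IsConvexSubposet S)
    (hA : ∀ a : ℤ, Shoe.l a ∈ S ↔ x ≤ zE a ∧ zE a ≤ y)
    (hB : ∀ b : ℤ, Shoe.r b ∈ S ↔ s ≤ zE b ∧ zE b ≤ t)
    (ha₀ : Shoe.l a₀ ∈ S) (hb₀ : Shoe.r b₀ ∈ S) {m : ℤ} (hm : x ≤ zE m) :
    s ≤ zE (m + ε) := by
  have ha : Shoe.l (min m a₀) ∈ S := (hA _).2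
    ⟨by rw [zE_mono.map_min]; exact le_min hm ((hA a₀).1 ha₀).1,
      (zE_mono (min_le_right _ _)).trans ((hA a₀).1 ha₀).2⟩
  have hb := hS.apply_min_mem Shoe.r_mono ha hb₀
    (Shoe.l_le_r (show min m a₀ + (ε : ℤ) ≤ m + ε by omega))
  exact ((hB _).1 hb).1.trans (zE_mono (min_le_left _ _))

lemma zE_sub_le_of_zE_le (hS : IsConvexSubposet S)
    (hA : ∀ a : ℤ, Shoe.l a ∈ S ↔ x ≤ zE a ∧ zE a ≤ y)
    (hB : ∀ b : ℤ, Shoe.r b ∈ S ↔ s ≤ zE b ∧ zE b ≤ t)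
    (ha₀ : Shoe.l a₀ ∈ S) (hb₀ : Shoe.r b₀ ∈ S) {m : ℤ} (hm : zE m ≤ y) :
    zE (m - ε) ≤ t := by
  have ha : Shoe.l (max m a₀) ∈ S := (hA _).2
    ⟨((hA a₀).1 ha₀).1.trans (zE_mono (le_max_right _ _)),
      by rw [zE_mono.map_max]; exact max_le hm ((hA a₀).1 ha₀).2⟩
  have hb := hS.apply_max_mem Shoe.r_mono ha hb₀
    (Shoe.r_le_l (show m - ε + (ε : ℤ) ≤ max m a₀ by omega))
  exact (zE_mono (le_max_left _ _)).trans ((hB _).1 hb).2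

end Endpoints

theorem interval_rep_restrictions_matched_general {K : Type} [Field K] (ε : ℕ)
    (L : Shoe (lamT ε) ⥤ ModuleCat K) (hL : IsIntervalRep L)
    (x y s t : EReal)
    (hx : x = ⊥ ∨ ∃ n : ℤ, x = zE n) (hy : y = ⊤ ∨ ∃ n : ℤ, y = zE n)
    (hs : s = ⊥ ∨ ∃ n : ℤ, s = zE n) (ht : t = ⊤ ∨ ∃ n : ℤ, t = zE n)
    (hxley : x ≤ y) (hslet : s ≤ t)
    (hleft : ∀ a : ℤ, Nontrivial (L.obj (Shoe.l a)) ↔ (x ≤ zE a ∧ zE a ≤ y))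
    (hright : ∀ a : ℤ, Nontrivial (L.obj (Shoe.r a)) ↔ (s ≤ zE a ∧ zE a ≤ t)) :
    closeE ε x s ∧ closeE ε y t ∧
    (∀ x0 y0 s0 t0 : ℤ, x = zE x0 → y = zE y0 → s = zE s0 → t = zE t0 →
      |y0 - x0| < 2 * (ε : ℤ) → |t0 - s0| < 2 * (ε : ℤ) →
      ((s0 - ε ≤ x0 ∧ x0 ≤ t0 - ε ∧ t0 - ε ≤ y0) ∨
       (x0 - ε ≤ s0 ∧ s0 ≤ y0 - ε ∧ y0 - ε ≤ t0))) := by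
  obtain ⟨-, hconn, hconv, -⟩ := hL
  obtain ⟨a₀, ha₀⟩ := exists_zE_mem_Icc hx hy hxley
  obtain ⟨b₀, hb₀⟩ := exists_zE_mem_Icc hs ht hslet
  replace ha₀ := (hleft a₀).2 ha₀
  replace hb₀ := (hright b₀).2 hb₀
  have hconv' := hconv.preimage Shoe.swap_mono
  have hxs m := le_zE_add_of_le_zE (m := m) hconv hleft hright ha₀ hb₀
  have hsx m := le_zE_add_of_le_zE (m := m) hconv' hright hleft hb₀ ha₀
  have hyt m := zE_sub_le_of_zE_le (m := m) hconv hleft hright ha₀ hb₀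
  have hty m := zE_sub_le_of_zE_le (m := m) hconv' hright hleft hb₀ ha₀
  refine ⟨closeE_of_forall_le_zE_add hx hs hxs hsx, closeE_of_forall_zE_sub_le hy ht hyt hty, ?_⟩
  rintro x0 y0 s0 t0 rfl rfl rfl rfl - -
  obtain ⟨a, b, ha, hb, hab⟩ := Shoe.exists_comparable_of_isConnectedSubposet hconn ha₀ hb₀
  obtain ⟨hxa, hay⟩ := (hleft a).1 ha
  obtain ⟨hsb, hbt⟩ := (hright b).1 hb
  simp only [zE_le_zE] at hxa hay hsb hbt
  have := zE_le_zE.1 (hxs x0 le_rfl)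
  have := zE_le_zE.1 (hsx s0 le_rfl)
  have := zE_le_zE.1 (hyt y0 le_rfl)
  have := zE_le_zE.1 (hty t0 le_rfl)
  change a + (ε : ℤ) ≤ b ∨ b + (ε : ℤ) ≤ a at hab
  omega

/-- If `L` is an interval representation of `Σ_ε ℤ` whose
restrictions to the left and right copies of `ℤ` are the nonzero interval modules
`I[x,y]` and `I[s,t]`, then `|x−s| ≤ ε` and `|y−t| ≤ ε` (with the `±∞`
conventions); and if moreover `|y−x| < 2ε` and `|t−s| < 2ε`, then
`s−ε ≤ x ≤ t−ε ≤ y` or `x−ε ≤ s ≤ y−ε ≤ t`. -/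
theorem interval_rep_restrictions_matched {K : Type} [Field K] (ε : ℕ)
    (L : Shoe (lamT ε) ⥤ ModuleCat K) (hL : IsIntervalRep L)
    (x y s t : EReal)
    (hx : x = ⊥ ∨ ∃ n : ℤ, x = zE n) (hy : y = ⊤ ∨ ∃ n : ℤ, y = zE n)
    (hs : s = ⊥ ∨ ∃ n : ℤ, s = zE n) (ht : t = ⊤ ∨ ∃ n : ℤ, t = zE n)
    (hxny : x ≠ ⊤) (hyny : y ≠ ⊥) (hsny : s ≠ ⊤) (htny : t ≠ ⊥)
    (hxley : x ≤ y) (hslet : s ≤ t)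
    (hleft : ∀ a : ℤ, Nontrivial (L.obj (Shoe.l a)) ↔ (x ≤ zE a ∧ zE a ≤ y))
    (hright : ∀ a : ℤ, Nontrivial (L.obj (Shoe.r a)) ↔ (s ≤ zE a ∧ zE a ≤ t)) :
    closeE ε x s ∧ closeE ε y t ∧
    (∀ x0 y0 s0 t0 : ℤ, x = zE x0 → y = zE y0 → s = zE s0 → t = zE t0 →
      |y0 - x0| < 2 * (ε : ℤ) → |t0 - s0| < 2 * (ε : ℤ) →
      ((s0 - ε ≤ x0 ∧ x0 ≤ t0 - ε ∧ t0 - ε ≤ y0) ∨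
       (x0 - ε ≤ s0 ∧ s0 ≤ y0 - ε ∧ y0 - ε ≤ t0))) :=
  interval_rep_restrictions_matched_general ε L hL x y s t hx hy hs ht hxley hslet hleft hright
end
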